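/- arXiv:1909.11648 — 4 statements merged into one kernel-verified Lean document; each statement's English description precedes it below -/
import Mathlib

section
/- For every integer D ≥ 1 whose square is a sum of two integer squares, there exists a triangle with vertices in ℤ² all of whose side lengths are at least D, all of whose angles are at most π/2, and whose area is less than (√3·D² + 2√2·D)/4. -/
noncomputable section

/-- Points of the Euclidean plane. -/
abbrev Pt := EuclideanSpace ℝ (Fin 2)

/-- The area of the triangle with vertices `p`, `q`, `r`. -/
def triArea (p q r : Pt) : ℝ :=
  |(q 0 - p 0) * (r 1 - p 1) - (q 1 - p 1) * (r 0 - p 0)| / 2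

/-- A point of the plane belonging to the integer lattice `ℤ²`. -/
def IsLatticePt (p : Pt) : Prop := (∃ a : ℤ, p 0 = a) ∧ (∃ b : ℤ, p 1 = b)

/-!
Take the base from `(0,0)` to `(D,0)` and the apex `(x, h)`, with `x = ⌊D/2⌋` and `h` an integer
such that `√N ≤ 2h < √N + 2`, where `N = 3D² + 2D - 1`. The lower bound `4h² ≥ N` makes both legs
at least `D` and the apex angle non-obtuse (`h² ≥ D²/4 ≥ x(D - x)`), while the upper bound
together with `√N + 2 < √3·D + 2√2` bounds the area `D·h/2`.
-/

open Real EuclideanGeometry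

theorem InnerProductGeometry.angle_le_pi_div_two_of_inner_nonneg {V : Type*}
    [NormedAddCommGroup V] [InnerProductSpace ℝ V] {x y : V} (h : 0 ≤ inner ℝ x y) :
    InnerProductGeometry.angle x y ≤ π / 2 := by
  rw [InnerProductGeometry.angle, arccos_le_pi_div_two]
  positivity

theorem isLatticePt_intCast (a b : ℤ) : IsLatticePt !₂[(a : ℝ), b] :=
  ⟨⟨a, by simp⟩, ⟨b, by simp⟩⟩

theorem le_dist_of_sq_le {p q : Pt} {d : ℝ}
    (h : d ^ 2 ≤ (p 0 - q 0) ^ 2 + (p 1 - q 1) ^ 2) : d ≤ dist p q := by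
  rw [EuclideanSpace.dist_eq, Fin.sum_univ_two, Real.dist_eq, Real.dist_eq, sq_abs, sq_abs]
  exact Real.le_sqrt_of_sq_le h

theorem angle_le_pi_div_two_of_coords {p q r : Pt}
    (h : 0 ≤ (p 0 - q 0) * (r 0 - q 0) + (p 1 - q 1) * (r 1 - q 1)) : ∠ p q r ≤ π / 2 := by
  refine InnerProductGeometry.angle_le_pi_div_two_of_inner_nonneg ?_
  simpa [PiLp.inner_apply, Fin.sum_univ_two, mul_comm] using h

theorem triArea_base_apex (d x y : ℝ) : triArea !₂[0, 0] !₂[d, 0] !₂[x, y] = |d * y| / 2 := by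
  simp [triArea]

theorem sqrt_three_mul_sq_add_lt {d : ℝ} (hd : 0 ≤ d) :
    √(3 * d ^ 2 + 2 * d - 1) + 2 < √3 * d + 2 * √2 := by
  have h2 : 1.4 < √2 := by rw [lt_sqrt (by norm_num)]; norm_num
  have h2' : √2 < 1.5 := by rw [sqrt_lt' (by norm_num)]; norm_num
  have h3 : 1.7 < √3 := by rw [lt_sqrt (by norm_num)]; norm_num
  have hslope : 2 ≤ 4 * √3 * (√2 - 1) := by nlinarith
  rw [← lt_sub_iff_add_lt, sqrt_lt' (by nlinarith [sqrt_nonneg 3])]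
  nlinarith [sq_sqrt (show (0 : ℝ) ≤ 2 by norm_num), sq_sqrt (show (0 : ℝ) ≤ 3 by norm_num)]

theorem base_apex_triangle_sides_angles {d x y : ℝ} (hd : 1 ≤ d) (hxd : 2 * x ≤ d)
    (hdx : d ≤ 2 * x + 1) (hy : 3 * d ^ 2 + 2 * d - 1 ≤ 4 * y ^ 2) :
    d ≤ dist !₂[0, 0] !₂[d, 0] ∧ d ≤ dist !₂[d, 0] !₂[x, y] ∧ d ≤ dist !₂[0, 0] !₂[x, y] ∧
      ∠ !₂[d, 0] !₂[0, 0] !₂[x, y] ≤ π / 2 ∧ ∠ !₂[0, 0] !₂[d, 0] !₂[x, y] ≤ π / 2 ∧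
      ∠ !₂[0, 0] !₂[x, y] !₂[d, 0] ≤ π / 2 := by
  refine ⟨le_dist_of_sq_le ?_, le_dist_of_sq_le ?_, le_dist_of_sq_le ?_,
    angle_le_pi_div_two_of_coords ?_, angle_le_pi_div_two_of_coords ?_,
    angle_le_pi_div_two_of_coords ?_⟩ <;> simp <;> nlinarith

theorem stmt0_general (D : ℤ) (hD : 1 ≤ D) :
    ∃ p q r : Pt, IsLatticePt p ∧ IsLatticePt q ∧ IsLatticePt r ∧
      (D : ℝ) ≤ dist p q ∧ (D : ℝ) ≤ dist q r ∧ (D : ℝ) ≤ dist p r ∧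
      EuclideanGeometry.angle q p r ≤ Real.pi / 2 ∧
      EuclideanGeometry.angle p q r ≤ Real.pi / 2 ∧
      EuclideanGeometry.angle p r q ≤ Real.pi / 2 ∧
      triArea p q r < (Real.sqrt 3 * (D : ℝ) ^ 2 + 2 * Real.sqrt 2 * (D : ℝ)) / 4 := by
  set N : ℝ := 3 * D ^ 2 + 2 * D - 1
  obtain ⟨h, hNh, hhN⟩ : ∃ h : ℤ, √N ≤ 2 * h ∧ 2 * h < √N + 2 :=
    ⟨⌈√N / 2⌉, by linarith [Int.le_ceil (√N / 2)], by linarith [Int.ceil_lt_add_one (√N / 2)]⟩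
  have hDR : (1 : ℝ) ≤ D := by exact_mod_cast hD
  have hxD : 2 * ((D / 2 : ℤ) : ℝ) ≤ D := by exact_mod_cast Int.mul_ediv_self_le two_ne_zero
  have hDx : (D : ℝ) ≤ 2 * ((D / 2 : ℤ) : ℝ) + 1 := by
    exact_mod_cast (by omega : D ≤ 2 * (D / 2) + 1)
  obtain ⟨hpq, hqr, hpr, hp, hq, hr⟩ := base_apex_triangle_sides_angles (y := h) hDR hxD hDx
    (by nlinarith [(Real.sqrt_le_iff.mp hNh).2])
  refine ⟨!₂[0, 0], !₂[D, 0], !₂[(D / 2 : ℤ), h], by simpa using isLatticePt_intCast 0 0,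
    by simpa using isLatticePt_intCast D 0, isLatticePt_intCast _ _, hpq, hqr, hpr, hp, hq, hr, ?_⟩
  have hDpos : (0 : ℝ) < D := by linarith
  have hh : (0 : ℝ) ≤ h := by linarith [Real.sqrt_nonneg N]
  have h2h : 2 * (h : ℝ) < √3 * D + 2 * √2 := by linarith [sqrt_three_mul_sq_add_lt hDpos.le]
  rw [triArea_base_apex, abs_of_nonneg (by positivity)]
  nlinarith [mul_lt_mul_of_pos_left h2h hDpos]

/-- For every integer `D ≥ 1` whose square is a sum of two integer squares, there exists a
triangle with vertices in `ℤ²`, all side lengths at least `D`, all angles at most `π/2`,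
and area less than `(√3·D² + 2√2·D)/4`. -/
theorem stmt0 (D : ℤ) (hD : 1 ≤ D) (hGauss : ∃ m n : ℤ, D ^ 2 = m ^ 2 + n ^ 2) :
    ∃ p q r : Pt, IsLatticePt p ∧ IsLatticePt q ∧ IsLatticePt r ∧
      (D : ℝ) ≤ dist p q ∧ (D : ℝ) ≤ dist q r ∧ (D : ℝ) ≤ dist p r ∧
      EuclideanGeometry.angle q p r ≤ Real.pi / 2 ∧
      EuclideanGeometry.angle p q r ≤ Real.pi / 2 ∧
      EuclideanGeometry.angle p r q ≤ Real.pi / 2 ∧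
      triArea p q r < (Real.sqrt 3 * (D : ℝ) ^ 2 + 2 * Real.sqrt 2 * (D : ℝ)) / 4 :=
  stmt0_general D hD
end
end

section
/- Let D ≥ 1 and let T be a lattice triangle (vertices in ℤ²) with all side lengths ≥ D and all angles ≤ 2π/3. Then the area of T is at least S(D)/2, where S(D) is the doubled minimal area over all lattice triangles with side lengths ≥ D and all angles ≤ π/2. -/
/-!
If the angle of a lattice triangle `pqr` at `p` is obtuse but at most `2π/3`, reflect `q`
through `p`. The new triangle `p q' r` has the same area and an acute angle at `p`; with
`u = q - p`, `v = r - p`, its other two angles are those of `u, u + v` and `v, u + v`, which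
stay at most `2π/3`, and its new side satisfies `‖u + v‖² ≥ ‖u‖ ‖v‖ ≥ D²`. The sum of the
squared side lengths drops by `4 |⟪u, v⟫| ≥ 4`, as `⟪u, v⟫` is a negative integer, so after
finitely many reflections one reaches a non-obtuse admissible triangle of the same area.
-/

noncomputable section

/-- The set of doubled areas of lattice triangles with all side lengths at least `D`
and all angles at most `π/2`.  Its infimum is `S(D)`. -/
def admissibleDoubledAreas (D : ℝ) : Set ℝ :=
  {s | ∃ p q r : Pt, IsLatticePt p ∧ IsLatticePt q ∧ IsLatticePt r ∧
        D ≤ dist p q ∧ D ≤ dist q r ∧ D ≤ dist p r ∧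
        EuclideanGeometry.angle q p r ≤ Real.pi / 2 ∧
        EuclideanGeometry.angle p q r ≤ Real.pi / 2 ∧
        EuclideanGeometry.angle p r q ≤ Real.pi / 2 ∧
        s = 2 * triArea p q r}

namespace InnerProductGeometry

open Real
open scoped RealInnerProductSpace

variable {V : Type*} [NormedAddCommGroup V] [InnerProductSpace ℝ V]

theorem angle_le_pi_div_two_of_inner_nonneg_s1 {u v : V} (h : 0 ≤ ⟪u, v⟫) :
    angle u v ≤ π / 2 :=
  arccos_le_pi_div_two.2 (div_nonneg h (by positivity))

theorem inner_neg_of_pi_div_two_lt_angle {u v : V} (h : π / 2 < angle u v) : ⟪u, v⟫ < 0 :=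
  not_le.mp fun hs => h.not_ge (angle_le_pi_div_two_of_inner_nonneg_s1 hs)

theorem angle_le_two_pi_div_three_iff (u v : V) :
    angle u v ≤ 2 * π / 3 ↔ -(‖u‖ * ‖v‖) ≤ 2 * ⟪u, v⟫ := by
  rcases eq_or_ne u 0 with rfl | hu
  · simp only [angle_zero_left, inner_zero_left, norm_zero, zero_mul, neg_zero, mul_zero,
      le_refl, iff_true]
    linarith [pi_pos]
  rcases eq_or_ne v 0 with rfl | hv
  · simp only [angle_zero_right, inner_zero_right, norm_zero, mul_zero, neg_zero,
      le_refl, iff_true]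
    linarith [pi_pos]
  have hpos : 0 < ‖u‖ * ‖v‖ := by positivity
  have hcos : cos (2 * π / 3) = -(1 / 2) := by
    rw [show 2 * π / 3 = π - π / 3 by ring, cos_pi_sub, cos_pi_div_three]
  rw [← strictAntiOn_cos.le_iff_ge ⟨by positivity, by linarith [pi_pos]⟩
      ⟨angle_nonneg u v, angle_le_pi u v⟩, hcos, cos_angle, le_div_iff₀ hpos]
  constructor <;> intro h <;> linarith

theorem angle_add_le_two_pi_div_three {u v : V} (hs : ⟪u, v⟫ < 0)
    (h : angle u v ≤ 2 * π / 3) : angle u (u + v) ≤ 2 * π / 3 := by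
  rw [angle_le_two_pi_div_three_iff] at h ⊢
  rw [inner_add_right, real_inner_self_eq_norm_sq]
  rcases le_or_gt 0 (‖u‖ ^ 2 + ⟪u, v⟫) with hA | hA
  · nlinarith [norm_nonneg u, norm_nonneg (u + v)]
  have hsq : (2 * (‖u‖ ^ 2 + ⟪u, v⟫)) ^ 2 ≤ (‖u‖ * ‖u + v‖) ^ 2 := by
    -- with `A = ‖u‖²`, `s = ⟪u, v⟫`: `4 s² ≤ A ‖v‖²` and `A + 2 s < 0` give
    -- `4 (A + s)² ≤ A (A + ‖v‖² + 2 s)`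
    have hcs : 4 * ⟪u, v⟫ ^ 2 ≤ ‖u‖ ^ 2 * ‖v‖ ^ 2 := by nlinarith
    rw [mul_pow ‖u‖, norm_add_sq_real]
    nlinarith
  exact (abs_le_of_sq_le_sq' hsq (by positivity)).1

theorem norm_mul_norm_le_norm_add_sq {u v : V} (h : angle u v ≤ 2 * π / 3) :
    ‖u‖ * ‖v‖ ≤ ‖u + v‖ ^ 2 := by
  rw [angle_le_two_pi_div_three_iff] at h
  rw [norm_add_sq_real]
  nlinarith [sq_nonneg (‖u‖ - ‖v‖)]

end InnerProductGeometry

open Real EuclideanGeometry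
open scoped RealInnerProductSpace

theorem inner_eq_coords (u v : Pt) : ⟪u, v⟫ = u 0 * v 0 + u 1 * v 1 := by
  simp [PiLp.inner_apply, Fin.sum_univ_two, mul_comm]

namespace IsLatticePt

theorem add {u v : Pt} (hu : IsLatticePt u) (hv : IsLatticePt v) : IsLatticePt (u + v) := by
  obtain ⟨⟨a, ha⟩, ⟨b, hb⟩⟩ := hu
  obtain ⟨⟨c, hc⟩, ⟨d, hd⟩⟩ := hv
  exact ⟨⟨a + c, by simp [ha, hc]⟩, ⟨b + d, by simp [hb, hd]⟩⟩

theorem sub {u v : Pt} (hu : IsLatticePt u) (hv : IsLatticePt v) : IsLatticePt (u - v) := by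
  obtain ⟨⟨a, ha⟩, ⟨b, hb⟩⟩ := hu
  obtain ⟨⟨c, hc⟩, ⟨d, hd⟩⟩ := hv
  exact ⟨⟨a - c, by simp [ha, hc]⟩, ⟨b - d, by simp [hb, hd]⟩⟩

theorem exists_inner_eq_intCast {u v : Pt} (hu : IsLatticePt u) (hv : IsLatticePt v) :
    ∃ z : ℤ, ⟪u, v⟫ = z := by
  obtain ⟨⟨a, ha⟩, ⟨b, hb⟩⟩ := hu
  obtain ⟨⟨c, hc⟩, ⟨d, hd⟩⟩ := hv
  exact ⟨a * c + b * d, by rw [inner_eq_coords, ha, hb, hc, hd]; push_cast; ring⟩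

theorem inner_le_neg_one {u v : Pt} (hu : IsLatticePt u) (hv : IsLatticePt v)
    (h : ⟪u, v⟫ < 0) : ⟪u, v⟫ ≤ -1 := by
  obtain ⟨z, hz⟩ := hu.exists_inner_eq_intCast hv
  rw [hz] at h ⊢
  have hz₀ : z < 0 := by exact_mod_cast h
  exact_mod_cast (by omega : z ≤ -1)

end IsLatticePt

structure IsAdmissibleTriangle (D θ : ℝ) (p q r : Pt) : Prop where
  lattice₁ : IsLatticePt p
  lattice₂ : IsLatticePt q
  lattice₃ : IsLatticePt r
  dist₁₂ : D ≤ dist p q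
  dist₂₃ : D ≤ dist q r
  dist₁₃ : D ≤ dist p r
  angle₁ : ∠ q p r ≤ θ
  angle₂ : ∠ p q r ≤ θ
  angle₃ : ∠ p r q ≤ θ

def sideSqSum (p q r : Pt) : ℝ := dist p q ^ 2 + dist q r ^ 2 + dist p r ^ 2

theorem sideSqSum_nonneg (p q r : Pt) : 0 ≤ sideSqSum p q r := by
  unfold sideSqSum; positivity

theorem sideSqSum_swap₁₂ (p q r : Pt) : sideSqSum q p r = sideSqSum p q r := by
  simp only [sideSqSum, dist_comm q p]; ring

theorem sideSqSum_swap₁₃ (p q r : Pt) : sideSqSum r q p = sideSqSum p q r := by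
  simp only [sideSqSum, dist_comm r, dist_comm q p]; ring

theorem triArea_swap₁₂ (p q r : Pt) : triArea q p r = triArea p q r := by
  unfold triArea; rw [← abs_neg]; congr 2; ring

theorem triArea_swap₁₃ (p q r : Pt) : triArea r q p = triArea p q r := by
  unfold triArea; rw [← abs_neg]; congr 2; ring

theorem dist_pointReflection_eq_norm_add {V : Type*} [NormedAddCommGroup V] (p q r : V) :
    dist (Equiv.pointReflection p q) r = ‖(q - p) + (r - p)‖ := by
  rw [dist_eq_norm, ← norm_neg, Equiv.pointReflection_apply, vsub_eq_sub, vadd_eq_add]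
  congr 1; abel

theorem triArea_pointReflection (p q r : Pt) :
    triArea p (Equiv.pointReflection p q) r = triArea p q r := by
  have h (i : Fin 2) : Equiv.pointReflection p q i - p i = p i - q i := by
    rw [← PiLp.sub_apply, ← vsub_eq_sub, Equiv.pointReflection_vsub_left, vsub_eq_sub,
      PiLp.sub_apply]
  unfold triArea; rw [h, h, ← abs_neg]; congr 2; ring

theorem sideSqSum_pointReflection (p q r : Pt) :
    sideSqSum p (Equiv.pointReflection p q) r = sideSqSum p q r + 4 * ⟪q - p, r - p⟫ := by
  have hqr : dist q r = ‖(q - p) - (r - p)‖ := by rw [dist_eq_norm]; congr 1; abel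
  simp only [sideSqSum, dist_left_pointReflection, dist_pointReflection_eq_norm_add, hqr,
    norm_add_sq_real, norm_sub_sq_real]
  ring

namespace IsAdmissibleTriangle

variable {D θ : ℝ} {p q r : Pt}

theorem swap₁₂ (h : IsAdmissibleTriangle D θ p q r) : IsAdmissibleTriangle D θ q p r :=
  ⟨h.lattice₂, h.lattice₁, h.lattice₃, dist_comm p q ▸ h.dist₁₂, h.dist₁₃, h.dist₂₃,
    h.angle₂, h.angle₁, angle_comm p r q ▸ h.angle₃⟩

theorem swap₁₃ (h : IsAdmissibleTriangle D θ p q r) : IsAdmissibleTriangle D θ r q p :=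
  ⟨h.lattice₃, h.lattice₂, h.lattice₁, dist_comm q r ▸ h.dist₂₃, dist_comm p q ▸ h.dist₁₂,
    dist_comm p r ▸ h.dist₁₃, angle_comm p r q ▸ h.angle₃, angle_comm p q r ▸ h.angle₂,
    angle_comm q p r ▸ h.angle₁⟩

theorem two_mul_triArea_mem (h : IsAdmissibleTriangle D (π / 2) p q r) :
    2 * triArea p q r ∈ admissibleDoubledAreas D :=
  ⟨p, q, r, h.lattice₁, h.lattice₂, h.lattice₃, h.dist₁₂, h.dist₂₃, h.dist₁₃,
    h.angle₁, h.angle₂, h.angle₃, rfl⟩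

theorem pointReflection (h : IsAdmissibleTriangle D (2 * π / 3) p q r)
    (hobtuse : π / 2 < ∠ q p r) :
    IsAdmissibleTriangle D (2 * π / 3) p (Equiv.pointReflection p q) r := by
  have hp : ∠ q p r = InnerProductGeometry.angle (q - p) (r - p) := rfl
  have hs := InnerProductGeometry.inner_neg_of_pi_div_two_lt_angle (hp ▸ hobtuse)
  have hp' : ∠ (Equiv.pointReflection p q) p r =
      InnerProductGeometry.angle (-(q - p)) (r - p) := by
    rw [angle, Equiv.pointReflection_vsub_left, neg_sub]; rfl
  have hq' : ∠ p (Equiv.pointReflection p q) r =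
      InnerProductGeometry.angle (q - p) ((q - p) + (r - p)) := by
    simp only [angle, vsub_eq_sub, Equiv.pointReflection_apply, vadd_eq_add]
    congr 1 <;> abel
  have hr' : ∠ p r (Equiv.pointReflection p q) =
      InnerProductGeometry.angle (r - p) ((r - p) + (q - p)) := by
    simp only [angle, vsub_eq_sub, Equiv.pointReflection_apply, vadd_eq_add,
      ← InnerProductGeometry.angle_neg_neg (r - p)]
    congr 1 <;> abel
  have hD : D ≤ ‖(q - p) + (r - p)‖ := by
    rcases le_or_gt D 0 with hD | hD
    · exact hD.trans (norm_nonneg _)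
    have hu : D ≤ ‖q - p‖ := by rw [← dist_eq_norm, dist_comm]; exact h.dist₁₂
    have hv : D ≤ ‖r - p‖ := by rw [← dist_eq_norm, dist_comm]; exact h.dist₁₃
    have := InnerProductGeometry.norm_mul_norm_le_norm_add_sq (hp ▸ h.angle₁)
    nlinarith [mul_le_mul hu hv hD.le (norm_nonneg _), norm_nonneg (q - p + (r - p))]
  refine ⟨h.lattice₁, ?_, h.lattice₃, (dist_left_pointReflection p q).symm ▸ h.dist₁₂,
    dist_pointReflection_eq_norm_add p q r ▸ hD, h.dist₁₃, ?_, ?_, ?_⟩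
  · rw [Equiv.pointReflection_apply, vsub_eq_sub, vadd_eq_add]
    exact (h.lattice₁.sub h.lattice₂).add h.lattice₁
  · rw [hp']
    refine (InnerProductGeometry.angle_le_pi_div_two_of_inner_nonneg_s1 ?_).trans ?_
    · rw [inner_neg_left]; linarith
    · linarith [pi_pos]
  · exact hq' ▸ InnerProductGeometry.angle_add_le_two_pi_div_three hs (hp ▸ h.angle₁)
  · refine hr' ▸ InnerProductGeometry.angle_add_le_two_pi_div_three ?_ ?_
    · rwa [real_inner_comm]
    · rw [InnerProductGeometry.angle_comm]; exact hp ▸ h.angle₁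

theorem exists_descent_of_pi_div_two_lt_angle₁ (h : IsAdmissibleTriangle D (2 * π / 3) p q r)
    (hobtuse : π / 2 < ∠ q p r) :
    ∃ p' q' r', IsAdmissibleTriangle D (2 * π / 3) p' q' r' ∧
      triArea p' q' r' = triArea p q r ∧ sideSqSum p' q' r' + 4 ≤ sideSqSum p q r := by
  have hs := InnerProductGeometry.inner_neg_of_pi_div_two_lt_angle hobtuse
  have hs₁ := (h.lattice₂.sub h.lattice₁).inner_le_neg_one (h.lattice₃.sub h.lattice₁) hs
  refine ⟨p, Equiv.pointReflection p q, r, h.pointReflection hobtuse,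
    triArea_pointReflection p q r, ?_⟩
  rw [sideSqSum_pointReflection]
  linarith

theorem exists_descent (h : IsAdmissibleTriangle D (2 * π / 3) p q r)
    (hobtuse : ¬IsAdmissibleTriangle D (π / 2) p q r) :
    ∃ p' q' r', IsAdmissibleTriangle D (2 * π / 3) p' q' r' ∧
      triArea p' q' r' = triArea p q r ∧ sideSqSum p' q' r' + 4 ≤ sideSqSum p q r := by
  rcases lt_or_ge (π / 2) (∠ q p r) with h₁ | h₁
  · exact h.exists_descent_of_pi_div_two_lt_angle₁ h₁
  rcases lt_or_ge (π / 2) (∠ p q r) with h₂ | h₂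
  · rw [← triArea_swap₁₂, ← sideSqSum_swap₁₂]
    exact h.swap₁₂.exists_descent_of_pi_div_two_lt_angle₁ h₂
  rcases lt_or_ge (π / 2) (∠ p r q) with h₃ | h₃
  · rw [← triArea_swap₁₃, ← sideSqSum_swap₁₃]
    exact h.swap₁₃.exists_descent_of_pi_div_two_lt_angle₁ (angle_comm p r q ▸ h₃)
  exact absurd ⟨h.lattice₁, h.lattice₂, h.lattice₃, h.dist₁₂, h.dist₂₃, h.dist₁₃, h₁, h₂, h₃⟩
    hobtuse

theorem two_mul_triArea_mem_of_two_pi_div_three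
    (h : IsAdmissibleTriangle D (2 * π / 3) p q r) :
    2 * triArea p q r ∈ admissibleDoubledAreas D := by
  suffices ∀ n : ℕ, ∀ p q r, IsAdmissibleTriangle D (2 * π / 3) p q r →
      sideSqSum p q r < n → 2 * triArea p q r ∈ admissibleDoubledAreas D by
    obtain ⟨n, hn⟩ := exists_nat_gt (sideSqSum p q r)
    exact this n p q r h hn
  intro n
  induction n with
  | zero =>
    intro p q r _ hn
    exact absurd (sideSqSum_nonneg p q r) (by push_cast at hn; linarith)
  | succ n ih =>
    intro p q r h hn
    by_cases hright : IsAdmissibleTriangle D (π / 2) p q r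
    · exact hright.two_mul_triArea_mem
    obtain ⟨p', q', r', h', harea, hsum⟩ := h.exists_descent hright
    rw [← harea]
    exact ih p' q' r' h' (by push_cast at hn; linarith)

end IsAdmissibleTriangle

theorem admissibleDoubledAreas_bddBelow (D : ℝ) : BddBelow (admissibleDoubledAreas D) := by
  refine ⟨0, ?_⟩
  rintro _ ⟨p, q, r, -, -, -, -, -, -, -, -, -, rfl⟩
  unfold triArea
  positivity

theorem stmt1_general (D : ℝ) (p q r : Pt)
    (hp : IsLatticePt p) (hq : IsLatticePt q) (hr : IsLatticePt r)
    (hpq : D ≤ dist p q) (hqr : D ≤ dist q r) (hpr : D ≤ dist p r)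
    (hA : EuclideanGeometry.angle q p r ≤ 2 * Real.pi / 3)
    (hB : EuclideanGeometry.angle p q r ≤ 2 * Real.pi / 3)
    (hC : EuclideanGeometry.angle p r q ≤ 2 * Real.pi / 3) :
    sInf (admissibleDoubledAreas D) / 2 ≤ triArea p q r := by
  have hmem := IsAdmissibleTriangle.two_mul_triArea_mem_of_two_pi_div_three
    ⟨hp, hq, hr, hpq, hqr, hpr, hA, hB, hC⟩
  linarith [csInf_le (admissibleDoubledAreas_bddBelow D) hmem]

/-- If `T` is a lattice triangle with all side lengths `≥ D` and all angles `≤ 2π/3`,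
then its area is at least `S(D)/2`, where `S(D)` is the doubled minimal area over lattice
triangles with side lengths `≥ D` and all angles `≤ π/2`. -/
theorem stmt1 (D : ℝ) (hD : 1 ≤ D) (p q r : Pt)
    (hp : IsLatticePt p) (hq : IsLatticePt q) (hr : IsLatticePt r)
    (hpq : D ≤ dist p q) (hqr : D ≤ dist q r) (hpr : D ≤ dist p r)
    (hA : EuclideanGeometry.angle q p r ≤ 2 * Real.pi / 3)
    (hB : EuclideanGeometry.angle p q r ≤ 2 * Real.pi / 3)
    (hC : EuclideanGeometry.angle p r q ≤ 2 * Real.pi / 3) :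
    sInf (admissibleDoubledAreas D) / 2 ≤ triArea p q r :=
  stmt1_general D p q r hp hq hr hpq hqr hpr hA hB hC
end
end

section
/- For D ≥ 1 and 0 ≤ δ ≤ √2/2, the area of the isosceles trapezoid inscribed in a circle of radius r = D + δ having three sides of length D equals (2D³/r)·(1 − D²/(4r²))^{3/2}, and this quantity is at least (3√3·D²)/4 − √3·δ². -/
noncomputable section
set_option maxHeartbeats 1000000

/-- The planar cross product of two vectors. -/
def cross (u v : Pt) : ℝ := u 0 * v 1 - u 1 * v 0

theorem poly_core' (D δ : ℝ) (hD : 1 ≤ D) (hδ0 : 0 ≤ δ) (hu : 2*δ^2 ≤ D^2) :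
    3*(D+δ)^8*(3*D^2-4*δ^2)^2 ≤ D^6*(4*(D+δ)^2-D^2)^3 := by
  have hD0 : (0:ℝ) ≤ D := by linarith
  have hu' : (0:ℝ) ≤ D^2 - 2*δ^2 := by linarith
  nlinarith [mul_nonneg (pow_nonneg hδ0 3) (pow_nonneg hD0 9),
    mul_nonneg (pow_nonneg hδ0 4) (pow_nonneg hD0 8),
    mul_nonneg (pow_nonneg hδ0 5) (pow_nonneg hD0 7),
    mul_nonneg (pow_nonneg hδ0 6) (pow_nonneg hD0 6),
    mul_nonneg (pow_nonneg hδ0 7) (pow_nonneg hD0 5),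
    mul_nonneg (pow_nonneg hδ0 10) hu',
    mul_nonneg (mul_nonneg (pow_nonneg hδ0 9) hD0) hu',
    mul_nonneg (mul_nonneg (pow_nonneg hδ0 8) (pow_nonneg hD0 2)) hu',
    mul_nonneg (mul_nonneg (pow_nonneg hδ0 7) (pow_nonneg hD0 3)) hu',
    mul_nonneg (mul_nonneg (pow_nonneg hδ0 6) (pow_nonneg hD0 4)) hu']

theorem ineq_core (D δ : ℝ) (hD : 1 ≤ D) (hδ0 : 0 ≤ δ) (hδ1 : δ ≤ Real.sqrt 2 / 2) :
    (3 * Real.sqrt 3 * D ^ 2) / 4 - Real.sqrt 3 * δ ^ 2 ≤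
      (2 * D ^ 3 / (D + δ)) * (Real.sqrt (1 - D ^ 2 / (4 * (D + δ) ^ 2))) ^ 3 := by
  set r := D + δ with hrdef
  have hr : 0 < r := by simp only [hrdef]; linarith
  set t := Real.sqrt (1 - D ^ 2 / (4 * r ^ 2)) with htdef
  have harg : 0 ≤ 1 - D ^ 2 / (4 * r ^ 2) := by
    rw [sub_nonneg, div_le_one (by positivity)]
    nlinarith
  have ht0 : 0 ≤ t := Real.sqrt_nonneg _
  have ht2 : t ^ 2 = 1 - D ^ 2 / (4 * r ^ 2) := Real.sq_sqrt harg
  have ht2' : t ^ 2 * (4 * r ^ 2) = 4 * r ^ 2 - D ^ 2 := by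
    rw [ht2]; field_simp
  have ht6 : t ^ 6 * (64 * r ^ 6) = (4 * r ^ 2 - D ^ 2) ^ 3 := by
    linear_combination ((t^2*(4*r^2))^2 + (t^2*(4*r^2))*(4*r^2-D^2) + (4*r^2-D^2)^2) * ht2'
  have hs3 : (0:ℝ) ≤ Real.sqrt 3 := Real.sqrt_nonneg 3
  have hs32 : (Real.sqrt 3) ^ 2 = 3 := Real.sq_sqrt (by norm_num)
  have hd2 : 2 * δ ^ 2 ≤ D ^ 2 := by
    have h2 : (Real.sqrt 2) ^ 2 = 2 := Real.sq_sqrt (by norm_num)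
    nlinarith [Real.sqrt_nonneg 2]
  have hpoly := poly_core' D δ hD hδ0 hd2
  -- compare A := √3 (3D²-4δ²) r⁴ ≤ B := 8 D³ t³ r³
  have hA0 : 0 ≤ Real.sqrt 3 * (3*D^2 - 4*δ^2) * r^4 := by
    have : (0:ℝ) ≤ 3*D^2 - 4*δ^2 := by nlinarith
    positivity
  have hB0 : 0 ≤ 8 * D^3 * t^3 * r^3 := by positivity
  have hA2 : (Real.sqrt 3 * (3*D^2 - 4*δ^2) * r^4)^2 = 3 * r^8 * (3*D^2-4*δ^2)^2 := by
    linear_combination ((3*D^2-4*δ^2)^2 * r^8) * hs32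
  have hB2 : (8 * D^3 * t^3 * r^3)^2 = D^6 * (4*r^2 - D^2)^3 := by
    linear_combination D^6 * ht6
  have hpoly' : 3 * r^8 * (3*D^2-4*δ^2)^2 ≤ D^6 * (4*r^2 - D^2)^3 := by
    have : 4*(D+δ)^2 - D^2 = 4*r^2 - D^2 := by rw [hrdef]
    calc 3 * r^8 * (3*D^2-4*δ^2)^2 = 3*(D+δ)^8*(3*D^2-4*δ^2)^2 := by rw [hrdef]
    _ ≤ D^6*(4*(D+δ)^2-D^2)^3 := hpoly
    _ = D^6 * (4*r^2 - D^2)^3 := by rw [hrdef]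
  have hAB : Real.sqrt 3 * (3*D^2 - 4*δ^2) * r^4 ≤ 8 * D^3 * t^3 * r^3 := by
    nlinarith [hA2, hB2, hpoly', hA0, hB0]
  rw [div_mul_eq_mul_div, le_div_iff₀ hr]
  refine le_of_mul_le_mul_right ?_ (show (0:ℝ) < 4*r^3 by positivity)
  calc (3*Real.sqrt 3*D^2/4 - Real.sqrt 3*δ^2)*r*(4*r^3)
      = Real.sqrt 3*(3*D^2-4*δ^2)*r^4 := by ring
    _ ≤ 8*D^3*t^3*r^3 := hAB
    _ = 2*D^3*t^3*(4*r^3) := by ring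

theorem geom_core (r D S a0 a1 b0 b1 c0 c1 d0 d1 : ℝ)
    (hr : 0 < r) (hD : 0 < D)
    (hS0 : 0 ≤ S) (hS2 : S^2 = r^2*D^2 - D^4/4)
    (ha : a0^2+a1^2 = r^2) (hb : b0^2+b1^2 = r^2)
    (hc : c0^2+c1^2 = r^2) (hd : d0^2+d1^2 = r^2)
    (hab : (b0-a0)^2+(b1-a1)^2 = D^2) (hbc : (c0-b0)^2+(c1-b1)^2 = D^2)
    (hcd : (d0-c0)^2+(d1-c1)^2 = D^2)
    (hX1 : 0 < (b0-a0)*(c1-b1)-(b1-a1)*(c0-b0))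
    (hX2 : 0 < (c0-b0)*(d1-c1)-(c1-b1)*(d0-c0))
    (hY1 : 0 < (d0-c0)*(a1-d1)-(d1-c1)*(a0-d0)) :
    (((b0-a0)*(c1-b1)-(b1-a1)*(c0-b0)) + ((d0-c0)*(a1-d1)-(d1-c1)*(a0-d0))) * r^4
      = 4*S^3 := by
  obtain ⟨k, hk⟩ : ∃ k, k = r^2 - D^2/2 := ⟨_, rfl⟩
  obtain ⟨e, he⟩ : ∃ e, e = a0*b1 - a1*b0 := ⟨_, rfl⟩
  obtain ⟨f, hf⟩ : ∃ f, f = b0*c1 - b1*c0 := ⟨_, rfl⟩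
  obtain ⟨g, hg⟩ : ∃ g, g = c0*d1 - c1*d0 := ⟨_, rfl⟩
  have hab' : a0*b0+a1*b1 = k := by rw [hk]; linear_combination (ha + hb - hab)/2
  have hbc' : b0*c0+b1*c1 = k := by rw [hk]; linear_combination (hb + hc - hbc)/2
  have hcd' : c0*d0+c1*d1 = k := by rw [hk]; linear_combination (hc + hd - hcd)/2
  have hrk : 0 < r^2 - k := by rw [hk]; linarith [pow_pos hD 2]
  have he2 : e^2 = r^4 - k^2 := by
    rw [he]; linear_combination (b0^2+b1^2)*ha + r^2*hb - (a0*b0+a1*b1 + k)*hab'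
  have hf2 : f^2 = r^4 - k^2 := by
    rw [hf]; linear_combination (c0^2+c1^2)*hb + r^2*hc - (b0*c0+b1*c1 + k)*hbc'
  have hg2 : g^2 = r^4 - k^2 := by
    rw [hg]; linear_combination (d0^2+d1^2)*hc + r^2*hd - (c0*d0+c1*d1 + k)*hcd'
  have hchi : (a0*c1-a1*c0)*r^2 = k*(e+f) := by
    rw [he, hf]
    linear_combination (a0*b1-a1*b0)*hbc' + (b0*c1-b1*c0)*hab' - (a0*c1-a1*c0)*hb
  have hchi2 : (b0*d1-b1*d0)*r^2 = k*(f+g) := by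
    rw [hf, hg]
    linear_combination (b0*c1-b1*c0)*hcd' + (c0*d1-c1*d0)*hbc' - (b0*d1-b1*d0)*hc
  have hacd : (a0*c0+a1*c1)*r^2 = k^2 - e*f := by
    rw [he, hf]
    linear_combination (a0*b0+a1*b1)*hbc' + k*hab' - (a0*c0+a1*c1)*hb
  have hAD : (a0*d1-a1*d0)*r^4 = k^2*(e+f) + (k^2-e*f)*g := by
    rw [hg]
    linear_combination (c0*d0+c1*d1)*hchi + (c0*d1-c1*d0)*hacd + k*(e+f)*hcd'
      - (a0*d1-a1*d0)*r^2*hc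
  have hXr : ((b0-a0)*(c1-b1)-(b1-a1)*(c0-b0))*r^2 = (e+f)*(r^2-k) := by
    linear_combination (-1)*hchi - r^2*he - r^2*hf
  have hXr2 : ((c0-b0)*(d1-c1)-(c1-b1)*(d0-c0))*r^2 = (f+g)*(r^2-k) := by
    linear_combination (-1)*hchi2 - r^2*hf - r^2*hg
  have hef : 0 < e + f := by
    by_contra h
    push_neg at h
    have h1 : (e+f)*(r^2-k) ≤ 0 := mul_nonpos_iff.mpr (Or.inr ⟨h, hrk.le⟩)
    have h2 := mul_pos hX1 (pow_pos hr 2)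
    rw [hXr] at h2
    linarith
  have hfg : 0 < f + g := by
    by_contra h
    push_neg at h
    have h1 : (f+g)*(r^2-k) ≤ 0 := mul_nonpos_iff.mpr (Or.inr ⟨h, hrk.le⟩)
    have h2 := mul_pos hX2 (pow_pos hr 2)
    rw [hXr2] at h2
    linarith
  have hfe : f = e := by
    have h0 : (f-e)*(f+e) = 0 := by linear_combination hf2 - he2
    rcases mul_eq_zero.mp h0 with h | h
    · linarith
    · exfalso; linarith
  subst hfe
  have hge : g = f := by
    have h0 : (g-f)*(g+f) = 0 := by linear_combination hg2 - hf2
    rcases mul_eq_zero.mp h0 with h | h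
    · linarith
    · exfalso; linarith
  subst hge
  have hgpos : 0 < g := by linarith
  have hgS : g = S := by
    have h0 : (g-S)*(g+S) = 0 := by
      linear_combination hg2 - hS2 - (k + r^2 - D^2/2)*hk
    rcases mul_eq_zero.mp h0 with h | h
    · linarith
    · exfalso; linarith
  linear_combination (-1)*hAD - r^4*(he + hf + hg) - 3*g*hg2 + (4*(g^2+g*S+S^2))*hgS

/-- For `D ≥ 1` and `0 ≤ δ ≤ √2/2`, the area of the isosceles trapezoid inscribed in a circle
of radius `r = D + δ` having three sides of length `D` equals
`(2D³/r)·(√(1 − D²/(4r²)))³`, and this quantity is at least `(3√3·D²)/4 − √3·δ²`.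
The trapezoid is given by its four vertices `p₁ p₂ p₃ p₄` listed in convex (positively
oriented) cyclic order on the circle, with the three consecutive sides
`p₁p₂`, `p₂p₃`, `p₃p₄` of length `D`; its area is `triArea p₁ p₂ p₃ + triArea p₁ p₃ p₄`. -/
theorem stmt4 (D δ : ℝ) (hD : 1 ≤ D) (hδ0 : 0 ≤ δ) (hδ1 : δ ≤ Real.sqrt 2 / 2)
    (o p₁ p₂ p₃ p₄ : Pt)
    (h1 : dist o p₁ = D + δ) (h2 : dist o p₂ = D + δ)
    (h3 : dist o p₃ = D + δ) (h4 : dist o p₄ = D + δ)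
    (c12 : dist p₁ p₂ = D) (c23 : dist p₂ p₃ = D) (c34 : dist p₃ p₄ = D)
    (hcv1 : 0 < cross (p₂ - p₁) (p₃ - p₂)) (hcv2 : 0 < cross (p₃ - p₂) (p₄ - p₃))
    (hcv3 : 0 < cross (p₄ - p₃) (p₁ - p₄)) (hcv4 : 0 < cross (p₁ - p₄) (p₂ - p₁)) :
    triArea p₁ p₂ p₃ + triArea p₁ p₃ p₄ =
        (2 * D ^ 3 / (D + δ)) * (Real.sqrt (1 - D ^ 2 / (4 * (D + δ) ^ 2))) ^ 3 ∧
      (3 * Real.sqrt 3 * D ^ 2) / 4 - Real.sqrt 3 * δ ^ 2 ≤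
        (2 * D ^ 3 / (D + δ)) * (Real.sqrt (1 - D ^ 2 / (4 * (D + δ) ^ 2))) ^ 3 := by
  have hDpos : (0:ℝ) < D := by linarith
  have hr : (0:ℝ) < D + δ := by linarith
  have dist2 : ∀ x y : Pt, (x 0 - y 0)^2 + (x 1 - y 1)^2 = (dist x y)^2 := by
    intro x y
    rw [EuclideanSpace.dist_eq, Real.sq_sqrt (by positivity)]
    simp [Fin.sum_univ_two, Real.dist_eq, sq_abs]
  set r := D + δ with hrdef
  set t := Real.sqrt (1 - D ^ 2 / (4 * r ^ 2)) with htdef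
  have harg : 0 ≤ 1 - D ^ 2 / (4 * r ^ 2) := by
    rw [sub_nonneg, div_le_one (by positivity)]
    nlinarith
  have ht0 : 0 ≤ t := Real.sqrt_nonneg _
  have ht2 : t ^ 2 = 1 - D ^ 2 / (4 * r ^ 2) := Real.sq_sqrt harg
  -- coordinates
  have ha : (p₁ 0 - o 0)^2 + (p₁ 1 - o 1)^2 = r^2 := by
    have := dist2 p₁ o; rw [dist_comm p₁ o, h1] at this; exact this
  have hb : (p₂ 0 - o 0)^2 + (p₂ 1 - o 1)^2 = r^2 := by
    have := dist2 p₂ o; rw [dist_comm p₂ o, h2] at this; exact this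
  have hc : (p₃ 0 - o 0)^2 + (p₃ 1 - o 1)^2 = r^2 := by
    have := dist2 p₃ o; rw [dist_comm p₃ o, h3] at this; exact this
  have hd : (p₄ 0 - o 0)^2 + (p₄ 1 - o 1)^2 = r^2 := by
    have := dist2 p₄ o; rw [dist_comm p₄ o, h4] at this; exact this
  have hab : (p₂ 0 - p₁ 0)^2 + (p₂ 1 - p₁ 1)^2 = D^2 := by
    have := dist2 p₂ p₁; rw [dist_comm p₂ p₁, c12] at this; exact this
  have hbc : (p₃ 0 - p₂ 0)^2 + (p₃ 1 - p₂ 1)^2 = D^2 := by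
    have := dist2 p₃ p₂; rw [dist_comm p₃ p₂, c23] at this; exact this
  have hcd : (p₄ 0 - p₃ 0)^2 + (p₄ 1 - p₃ 1)^2 = D^2 := by
    have := dist2 p₄ p₃; rw [dist_comm p₄ p₃, c34] at this; exact this
  have hcv1' : 0 < (p₂ 0 - p₁ 0) * (p₃ 1 - p₂ 1) - (p₂ 1 - p₁ 1) * (p₃ 0 - p₂ 0) := hcv1
  have hcv2' : 0 < (p₃ 0 - p₂ 0) * (p₄ 1 - p₃ 1) - (p₃ 1 - p₂ 1) * (p₄ 0 - p₃ 0) := hcv2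
  have hcv3' : 0 < (p₄ 0 - p₃ 0) * (p₁ 1 - p₄ 1) - (p₄ 1 - p₃ 1) * (p₁ 0 - p₄ 0) := hcv3
  -- S
  set S := D * r * t with hSdef
  have hS0 : 0 ≤ S := by positivity
  have hS2 : S^2 = r^2*D^2 - D^4/4 := by
    have h4r : (4:ℝ) * r^2 ≠ 0 := by positivity
    rw [hSdef]
    have : (D*r*t)^2 = D^2*r^2*(1 - D^2/(4*r^2)) := by
      rw [mul_pow, mul_pow, ht2]
    rw [this]; field_simp
  have key := geom_core r D S
    (p₁ 0 - o 0) (p₁ 1 - o 1) (p₂ 0 - o 0) (p₂ 1 - o 1)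
    (p₃ 0 - o 0) (p₃ 1 - o 1) (p₄ 0 - o 0) (p₄ 1 - o 1)
    hr hDpos hS0 hS2 ha hb hc hd
    (by linear_combination hab) (by linear_combination hbc) (by linear_combination hcd)
    (lt_of_lt_of_eq hcv1' (by ring)) (lt_of_lt_of_eq hcv2' (by ring))
    (lt_of_lt_of_eq hcv3' (by ring))
  constructor
  · -- area equality
    have e1 : triArea p₁ p₂ p₃ =
        ((p₂ 0 - p₁ 0) * (p₃ 1 - p₂ 1) - (p₂ 1 - p₁ 1) * (p₃ 0 - p₂ 0)) / 2 := by
      unfold triArea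
      rw [show (p₂ 0 - p₁ 0) * (p₃ 1 - p₁ 1) - (p₂ 1 - p₁ 1) * (p₃ 0 - p₁ 0)
          = (p₂ 0 - p₁ 0) * (p₃ 1 - p₂ 1) - (p₂ 1 - p₁ 1) * (p₃ 0 - p₂ 0) from by ring,
        abs_of_pos hcv1']
    have e2 : triArea p₁ p₃ p₄ =
        ((p₄ 0 - p₃ 0) * (p₁ 1 - p₄ 1) - (p₄ 1 - p₃ 1) * (p₁ 0 - p₄ 0)) / 2 := by
      unfold triArea
      rw [show (p₃ 0 - p₁ 0) * (p₄ 1 - p₁ 1) - (p₃ 1 - p₁ 1) * (p₄ 0 - p₁ 0)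
          = (p₄ 0 - p₃ 0) * (p₁ 1 - p₄ 1) - (p₄ 1 - p₃ 1) * (p₁ 0 - p₄ 0) from by ring,
        abs_of_pos hcv3']
    rw [e1, e2]
    have hr3 : (0:ℝ) < r^3 := pow_pos hr 3
    have key2 : (((p₂ 0 - p₁ 0) * (p₃ 1 - p₂ 1) - (p₂ 1 - p₁ 1) * (p₃ 0 - p₂ 0))
        + ((p₄ 0 - p₃ 0) * (p₁ 1 - p₄ 1) - (p₄ 1 - p₃ 1) * (p₁ 0 - p₄ 0))) * r
        = 4 * D^3 * t^3 := by
      apply mul_right_cancel₀ (ne_of_gt hr3)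
      calc _ = (((p₂ 0 - o 0 - (p₁ 0 - o 0)) * (p₃ 1 - o 1 - (p₂ 1 - o 1))
            - (p₂ 1 - o 1 - (p₁ 1 - o 1)) * (p₃ 0 - o 0 - (p₂ 0 - o 0)))
            + ((p₄ 0 - o 0 - (p₃ 0 - o 0)) * (p₁ 1 - o 1 - (p₄ 1 - o 1))
            - (p₄ 1 - o 1 - (p₃ 1 - o 1)) * (p₁ 0 - o 0 - (p₄ 0 - o 0)))) * r^4 := by ring
      _ = 4*S^3 := key
      _ = 4 * D^3 * t^3 * r^3 := by rw [hSdef]; ring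
    rw [div_mul_eq_mul_div, eq_div_iff (ne_of_gt hr)]
    linear_combination key2 / 2
  · exact ineq_core D δ hD hδ0 hδ1
end
end

section
/- Let x_1 < x_2 < x_3 < ... enumerate in increasing order the positive integers x such that the distance from √3·x to the nearest integer is less than 1/20. Then for every n > 1, the difference x_{n+1} − x_n is 4, 11, or 15. -/
/-- If `t` lies in `[M + 1/20, M + 19/20]` for some integer `M`, its distance to the
nearest integer is at least `1/20`. -/
lemma stmt19_far (t : ℝ) (M : ℤ) (h1 : (M : ℝ) + 1/20 ≤ t) (h2 : t ≤ (M : ℝ) + 19/20) :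
    ¬ |t - round t| < 1/20 := by
  intro h
  obtain ⟨hl, hr⟩ := abs_lt.mp h
  rcases le_or_gt (round t) M with hrd | hrd
  · have : ((round t : ℤ) : ℝ) ≤ (M : ℝ) := by exact_mod_cast hrd
    linarith
  · have : (M : ℝ) + 1 ≤ ((round t : ℤ) : ℝ) := by exact_mod_cast hrd
    linarith

/-- If `t` is within `1/20` of the integer `M`, its distance to the nearest integer is
less than `1/20`. -/
lemma stmt19_near (t : ℝ) (M : ℤ) (h : |t - (M : ℝ)| < 1/20) :
    |t - round t| < 1/20 := by
  obtain ⟨hl, hr⟩ := abs_lt.mp h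
  have : round t = M := by
    rw [round_eq]
    apply Int.floor_eq_iff.mpr
    constructor <;> linarith
  rw [this]
  exact h

/-- Structural step: if `f n + d` belongs to the set and nothing strictly between
`f n` and `f n + d` does, then `f (n+1) = f n + d`. -/
lemma stmt19_step (f : ℕ → ℕ) (hmono : StrictMono f)
    (hrange : ∀ x : ℕ,
      (0 < x ∧ |Real.sqrt 3 * x - round (Real.sqrt 3 * x)| < 1 / 20) ↔ ∃ n, f n = x)
    (n d : ℕ) (hd : 0 < d)
    (hmem : |Real.sqrt 3 * ((f n + d : ℕ) : ℝ) - round (Real.sqrt 3 * ((f n + d : ℕ) : ℝ))| < 1/20)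
    (hexcl : ∀ k : ℕ, 0 < k → k < d →
      ¬ |Real.sqrt 3 * ((f n + k : ℕ) : ℝ) - round (Real.sqrt 3 * ((f n + k : ℕ) : ℝ))| < 1/20) :
    f (n + 1) = f n + d := by
  obtain ⟨m, hm⟩ := (hrange (f n + d)).mp ⟨by omega, by exact_mod_cast hmem⟩
  have hnm : n < m := hmono.lt_iff_lt.mp (by omega)
  have hub : f (n + 1) ≤ f n + d := by
    have := hmono.monotone (show n + 1 ≤ m by omega)
    omega
  have hlb : f n < f (n + 1) := hmono (by omega)
  obtain ⟨h0', hmem'⟩ := (hrange (f (n + 1))).mpr ⟨n + 1, rfl⟩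
  by_contra hne
  have hk1 : 0 < f (n + 1) - f n := by omega
  have hk2 : f (n + 1) - f n < d := by omega
  apply hexcl (f (n + 1) - f n) hk1 hk2
  have hx : f n + (f (n + 1) - f n) = f (n + 1) := by omega
  rw [hx]
  exact_mod_cast hmem'

set_option maxHeartbeats 2000000 in
/-- Let `x_1 < x_2 < x_3 < ⋯` (here `f 0 < f 1 < f 2 < ⋯`) enumerate in increasing order
the positive integers `x` such that the distance from `√3·x` to the nearest integer is less
than `1/20`.  Then for every `n > 1` the difference `x_{n+1} − x_n` is `4`, `11` or `15`
(with the `0`-indexed enumeration `f`, this is the statement for all indices `n ≥ 1`). -/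
theorem stmt19 (f : ℕ → ℕ) (hmono : StrictMono f)
    (hrange : ∀ x : ℕ,
      (0 < x ∧ |Real.sqrt 3 * x - round (Real.sqrt 3 * x)| < 1 / 20) ↔ ∃ n, f n = x) :
    ∀ n, 1 ≤ n → f (n + 1) = f n + 4 ∨ f (n + 1) = f n + 11 ∨ f (n + 1) = f n + 15 := by
  intro n _
  have hs0 : (0 : ℝ) ≤ Real.sqrt 3 := Real.sqrt_nonneg 3
  have hsq : Real.sqrt 3 ^ 2 = 3 := Real.sq_sqrt (by norm_num)
  have hs1 : (1.7320508 : ℝ) < Real.sqrt 3 := by nlinarith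
  have hs2 : Real.sqrt 3 < 1.7320509 := by nlinarith
  set s : ℝ := Real.sqrt 3 with hsdef
  obtain ⟨hx0, hxd⟩ := (hrange (f n)).mpr ⟨n, rfl⟩
  set N : ℤ := round (s * (f n : ℝ)) with hNdef
  set a : ℝ := s * (f n : ℝ) - N with hadef
  obtain ⟨ha1, ha2⟩ := abs_lt.mp hxd
  have hxval : s * ((f n : ℕ) : ℝ) = (N : ℝ) + a := by rw [hadef]; ring
  have ht : ∀ k : ℕ, s * ((f n + k : ℕ) : ℝ) = (N : ℝ) + (a + (k : ℝ) * s) := by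
    intro k
    push_cast
    rw [mul_add]
    rw [show s * (f n : ℝ) = (N : ℝ) + a from hxval]
    ring
  have Hexcl : ∀ (k : ℕ) (q : ℤ), (q : ℝ) + 1/20 ≤ a + (k : ℝ) * s →
      a + (k : ℝ) * s ≤ (q : ℝ) + 19/20 →
      ¬ |s * ((f n + k : ℕ) : ℝ) - round (s * ((f n + k : ℕ) : ℝ))| < 1/20 := by
    intro k q h1 h2
    apply stmt19_far _ (N + q) <;> rw [ht k] <;> push_cast <;> linarith
  have Hmem : ∀ (d : ℕ) (q : ℤ), (q : ℝ) - 1/20 < a + (d : ℝ) * s →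
      a + (d : ℝ) * s < (q : ℝ) + 1/20 →
      |s * ((f n + d : ℕ) : ℝ) - round (s * ((f n + d : ℕ) : ℝ))| < 1/20 := by
    intro d q h1 h2
    apply stmt19_near _ (N + q)
    rw [ht d]
    rw [abs_lt]
    constructor <;> push_cast <;> linarith
  rcases lt_or_ge (6.95 - 4 * s) a with h4 | h4
  · -- gap 4
    left
    apply stmt19_step f hmono hrange n 4 (by norm_num)
    · exact Hmem 4 7 (by push_cast; linarith) (by push_cast; linarith)
    · intro k hk1 hk2
      interval_cases k
      · exact Hexcl 1 1 (by push_cast; linarith) (by push_cast; linarith)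
      · exact Hexcl 2 3 (by push_cast; linarith) (by push_cast; linarith)
      · exact Hexcl 3 5 (by push_cast; linarith) (by push_cast; linarith)
  · rcases lt_or_ge a (19.05 - 11 * s) with h11 | h11
    · -- gap 11
      right; left
      apply stmt19_step f hmono hrange n 11 (by norm_num)
      · exact Hmem 11 19 (by push_cast; linarith) (by push_cast; linarith)
      · intro k hk1 hk2
        interval_cases k
        · exact Hexcl 1 1 (by push_cast; linarith) (by push_cast; linarith)
        · exact Hexcl 2 3 (by push_cast; linarith) (by push_cast; linarith)
        · exact Hexcl 3 5 (by push_cast; linarith) (by push_cast; linarith)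
        · exact Hexcl 4 6 (by push_cast; linarith) (by push_cast; linarith)
        · exact Hexcl 5 8 (by push_cast; linarith) (by push_cast; linarith)
        · exact Hexcl 6 10 (by push_cast; linarith) (by push_cast; linarith)
        · exact Hexcl 7 12 (by push_cast; linarith) (by push_cast; linarith)
        · exact Hexcl 8 13 (by push_cast; linarith) (by push_cast; linarith)
        · exact Hexcl 9 15 (by push_cast; linarith) (by push_cast; linarith)
        · exact Hexcl 10 17 (by push_cast; linarith) (by push_cast; linarith)
    · -- gap 15
      right; right
      apply stmt19_step f hmono hrange n 15 (by norm_num)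
      · exact Hmem 15 26 (by push_cast; linarith) (by push_cast; linarith)
      · intro k hk1 hk2
        interval_cases k
        · exact Hexcl 1 1 (by push_cast; linarith) (by push_cast; linarith)
        · exact Hexcl 2 3 (by push_cast; linarith) (by push_cast; linarith)
        · exact Hexcl 3 5 (by push_cast; linarith) (by push_cast; linarith)
        · exact Hexcl 4 6 (by push_cast; linarith) (by push_cast; linarith)
        · exact Hexcl 5 8 (by push_cast; linarith) (by push_cast; linarith)
        · exact Hexcl 6 10 (by push_cast; linarith) (by push_cast; linarith)
        · exact Hexcl 7 12 (by push_cast; linarith) (by push_cast; linarith)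
        · exact Hexcl 8 13 (by push_cast; linarith) (by push_cast; linarith)
        · exact Hexcl 9 15 (by push_cast; linarith) (by push_cast; linarith)
        · exact Hexcl 10 17 (by push_cast; linarith) (by push_cast; linarith)
        · exact Hexcl 11 19 (by push_cast; linarith) (by push_cast; linarith)
        · exact Hexcl 12 20 (by push_cast; linarith) (by push_cast; linarith)
        · exact Hexcl 13 22 (by push_cast; linarith) (by push_cast; linarith)
        · exact Hexcl 14 24 (by push_cast; linarith) (by push_cast; linarith)
end
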